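/- Any inconsistency measure I satisfying Monotony, Independent Decomposability, and MinInc is bounded below by the distribution index: I(K) ≥ μ_D(K) for every inconsistent finite knowledge base K. -/

import Mathlib

inductive PropForm (V : Type) : Type
  | var : V → PropForm V
  | neg : PropForm V → PropForm V
  | conj : PropForm V → PropForm V → PropForm V
  | disj : PropForm V → PropForm V → PropForm V
  deriving DecidableEq

namespace PropForm
def eval {V : Type} (v : V → Bool) : PropForm V → Bool
  | var p => v p
  | neg f => !(eval v f)
  | conj f g => eval v f && eval v g
  | disj f g => eval v f || eval v g
end PropForm

/-- A finite knowledge base `K` is satisfiable (consistent) if some valuation makes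
all its formulas true. -/
def Sat {V : Type} (K : Finset (PropForm V)) : Prop :=
  ∃ v : V → Bool, ∀ f ∈ K, f.eval v = true

/-- `M` is a minimal unsatisfiable set: inconsistent, with every proper subset consistent. -/
def IsMUS {V : Type} (M : Finset (PropForm V)) : Prop :=
  ¬ Sat M ∧ ∀ M' ⊂ M, Sat M'

/-- The set of minimal unsatisfiable subsets of `K`. -/
def MUSes {V : Type} (K : Finset (PropForm V)) : Set (Finset (PropForm V)) :=
  {M | M ⊆ K ∧ IsMUS M}

/-- The unfree formulas of `K`: those belonging to some MUS of `K`. -/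
def unfree {V : Type} (K : Finset (PropForm V)) : Set (PropForm V) :=
  ⋃ M ∈ MUSes K, (↑M : Set (PropForm V))

/-- A partial MUS-decomposition of `K`: a family of pairwise-disjoint inconsistent
subsets of `K` such that the MUSes of their union are exactly the disjoint union of
the MUSes of the components. -/
def IsPartialMUSdecomp {V : Type} [DecidableEq V] (K : Finset (PropForm V))
    (T : Finset (Finset (PropForm V))) : Prop :=
  (∀ Ki ∈ T, Ki ⊆ K ∧ ¬ Sat Ki) ∧
  (↑T : Set (Finset (PropForm V))).PairwiseDisjoint id ∧
  MUSes (T.sup id) = ⋃ Ki ∈ T, MUSes Ki ∧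
  (↑T : Set (Finset (PropForm V))).Pairwise fun A B => Disjoint (MUSes A) (MUSes B)

/-- The distribution index: maximal cardinality of a partial MUS-decomposition. -/
noncomputable def muD {V : Type} [DecidableEq V] (K : Finset (PropForm V)) : ℕ :=
  sSup {n : ℕ | ∃ T : Finset (Finset (PropForm V)), IsPartialMUSdecomp K T ∧ T.card = n}

/-- Independent Decomposability of an inconsistency measure. -/
def IndDecomposable {V : Type} [DecidableEq V] (I : Finset (PropForm V) → ℝ) : Prop :=
  ∀ n : ℕ, ∀ K : Fin n → Finset (PropForm V),
    MUSes (Finset.univ.sup K) = ⋃ i, MUSes (K i) →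
    (∀ i j, i ≠ j → Disjoint (MUSes (K i)) (MUSes (K j))) →
    (∀ i j, i ≠ j → unfree (K i) ∩ unfree (K j) = ∅) →
    I (Finset.univ.sup K) = ∑ i, I (K i)

/-!
Take a partial MUS-decomposition `T` of `K` of maximal size; it exists because the empty family
is one and the members of any such family are pairwise disjoint nonempty subsets of `K`, so there
are at most `|K|` of them. Disjoint components have disjoint unfree sets, so Independent
Decomposability gives `I (⋃ T) = ∑ Ki ∈ T, I Ki`. Each component is inconsistent, hence contains a
MUS, so `I Ki ≥ 1` by MinInc and Monotony; finally `I (⋃ T) ≤ I K` by Monotony.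
-/

section Satisfiability

variable {V : Type}

lemma Sat.mono {K K' : Finset (PropForm V)} (hK : Sat K) (h : K' ⊆ K) : Sat K' :=
  let ⟨v, hv⟩ := hK
  ⟨v, fun f hf => hv f (h hf)⟩

lemma sat_empty : Sat (∅ : Finset (PropForm V)) :=
  ⟨fun _ => true, by simp⟩

lemma exists_isMUS_subset {K : Finset (PropForm V)} (hK : ¬ Sat K) : ∃ M ⊆ K, IsMUS M := by
  obtain ⟨M, hMK, hM⟩ := exists_minimal_le_of_wellFoundedLT (fun K => ¬ Sat K) K hK
  refine ⟨M, hMK, hM.prop, fun M' hM'M => ?_⟩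
  by_contra hM'
  exact hM'M.not_ge (hM.le_of_le hM' hM'M.le)

lemma unfree_subset (K : Finset (PropForm V)) : unfree K ⊆ (K : Set (PropForm V)) :=
  Set.iUnion₂_subset fun _ hM => Finset.coe_subset.mpr hM.1

end Satisfiability

section Decomposition

variable {V : Type} [DecidableEq V]

lemma isPartialMUSdecomp_empty (K : Finset (PropForm V)) : IsPartialMUSdecomp K ∅ := by
  refine ⟨by simp, by simp, ?_, by simp⟩
  ext M
  simp only [Finset.sup_empty, Finset.notMem_empty, Set.iUnion_of_empty, Set.iUnion_empty,
    Set.mem_empty_iff_false, iff_false]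
  exact fun hM => hM.2.1 (sat_empty.mono hM.1)

lemma IsPartialMUSdecomp.sup_subset {K : Finset (PropForm V)} {T : Finset (Finset (PropForm V))}
    (hT : IsPartialMUSdecomp K T) : T.sup id ⊆ K :=
  Finset.sup_le fun Ki hKi => (hT.1 Ki hKi).1

lemma IsPartialMUSdecomp.card_le {K : Finset (PropForm V)} {T : Finset (Finset (PropForm V))}
    (hT : IsPartialMUSdecomp K T) : T.card ≤ K.card := by
  have hne : ∀ Ki ∈ T, Ki.Nonempty := fun Ki hKi =>
    Finset.nonempty_iff_ne_empty.mpr fun h => (hT.1 Ki hKi).2 (h ▸ sat_empty)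
  calc T.card ≤ (T.biUnion id).card := Finset.card_le_card_biUnion hT.2.1 hne
    _ ≤ K.card := Finset.card_le_card (Finset.biUnion_subset.mpr fun Ki hKi => (hT.1 Ki hKi).1)

lemma exists_isPartialMUSdecomp_card_eq_muD (K : Finset (PropForm V)) :
    ∃ T, IsPartialMUSdecomp K T ∧ T.card = muD K := by
  refine Nat.sSup_mem (s := {n | ∃ T, IsPartialMUSdecomp K T ∧ T.card = n})
    ⟨0, ∅, isPartialMUSdecomp_empty K, rfl⟩ ⟨K.card, ?_⟩
  rintro _ ⟨T, hT, rfl⟩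
  exact hT.card_le

end Decomposition

section Measure

variable {V : Type} [DecidableEq V] {I : Finset (PropForm V) → ℝ}

lemma le_of_subset_of_monotony (hmono : ∀ K K' : Finset (PropForm V), I K ≤ I (K ∪ K'))
    {K K' : Finset (PropForm V)} (h : K ⊆ K') : I K ≤ I K' := by
  simpa only [Finset.union_eq_right.mpr h] using hmono K K'

lemma one_le_of_not_sat (hmono : ∀ K K' : Finset (PropForm V), I K ≤ I (K ∪ K'))
    (hmininc : ∀ M : Finset (PropForm V), IsMUS M → I M = 1)
    {K : Finset (PropForm V)} (hK : ¬ Sat K) : 1 ≤ I K := by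
  obtain ⟨M, hMK, hM⟩ := exists_isMUS_subset hK
  exact hmininc M hM ▸ le_of_subset_of_monotony hmono hMK

lemma IndDecomposable.apply_sup_eq_sum (hind : IndDecomposable I)
    {K : Finset (PropForm V)} {T : Finset (Finset (PropForm V))} (hT : IsPartialMUSdecomp K T) :
    I (T.sup id) = ∑ Ki ∈ T, I Ki := by
  obtain ⟨-, hdisj, hMUSes, hMUSdisj⟩ := hT
  let e : Fin T.card ≃ T := T.equivFin.symm
  let Kf : Fin T.card → Finset (PropForm V) := fun i => (e i).1
  have hKf_ne {i j} (hij : i ≠ j) : Kf i ≠ Kf j := fun h => hij (e.injective (Subtype.ext h))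
  have hsup : Finset.univ.sup Kf = T.sup id :=
    calc Finset.univ.sup Kf = Finset.univ.sup fun Ki : T => Ki.1 := by
          rw [← Finset.map_univ_equiv e, Finset.sup_map]; rfl
      _ = T.sup id := Finset.sup_attach T id
  have hunion : ⋃ i, MUSes (Kf i) = ⋃ Ki ∈ T, MUSes Ki := by
    rw [e.surjective.iUnion_comp (fun Ki : T => MUSes Ki.1)]
    ext M
    simp only [Set.mem_iUnion, Subtype.exists, exists_prop]
  have hsum : ∑ i, I (Kf i) = ∑ Ki ∈ T, I Ki := by
    rw [e.sum_comp (fun Ki : T => I Ki.1), Finset.sum_coe_sort T I]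
  rw [← hsup, ← hsum]
  refine hind _ Kf (by rw [hsup, hunion, hMUSes]) (fun i j hij => ?_) (fun i j hij => ?_)
  · exact hMUSdisj (e i).2 (e j).2 (hKf_ne hij)
  · have hd : Disjoint (Kf i : Set (PropForm V)) (Kf j) :=
      Finset.disjoint_coe.mpr (hdisj (e i).2 (e j).2 (hKf_ne hij))
    exact (hd.mono (unfree_subset _) (unfree_subset _)).inter_eq

end Measure

theorem stmt15_general {V : Type} [DecidableEq V] (I : Finset (PropForm V) → ℝ)
    (hmono : ∀ K K' : Finset (PropForm V), I K ≤ I (K ∪ K'))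
    (hind : IndDecomposable I)
    (hmininc : ∀ M : Finset (PropForm V), IsMUS M → I M = 1)
    (K : Finset (PropForm V)) :
    (muD K : ℝ) ≤ I K := by
  obtain ⟨T, hT, hcard⟩ := exists_isPartialMUSdecomp_card_eq_muD K
  calc (muD K : ℝ) = ∑ _Ki ∈ T, (1 : ℝ) := by simp [hcard]
    _ ≤ ∑ Ki ∈ T, I Ki :=
        Finset.sum_le_sum fun Ki hKi => one_le_of_not_sat hmono hmininc (hT.1 Ki hKi).2
    _ = I (T.sup id) := (hind.apply_sup_eq_sum hT).symm
    _ ≤ I K := le_of_subset_of_monotony hmono hT.sup_subset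

theorem stmt15 {V : Type} [DecidableEq V] (I : Finset (PropForm V) → ℝ)
    (hmono : ∀ K K' : Finset (PropForm V), I K ≤ I (K ∪ K'))
    (hind : IndDecomposable I)
    (hmininc : ∀ M : Finset (PropForm V), IsMUS M → I M = 1)
    (K : Finset (PropForm V)) (hK : ¬ Sat K) :
    (muD K : ℝ) ≤ I K :=
  stmt15_general I hmono hind hmininc K
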